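/- Let y, t ∈ ℝⁿ_{≥0} with 1 ≤ t_i ≤ β for all i, and let 1 ≤ q ≤ 2. Then Σ_{i∈[n]} γ_q(t_i, y_i) ≥ min{ ‖y‖₂²/(8β), ‖y‖_q^q/(8n) }. -/

import Mathlib

/-!
If every `|y i| ≤ β`, each summand is at least `y i ^ 2 / (2β)`: in the quadratic regime because
`t ^ (q - 2) ≥ 1 / β`, in the other because `γ_q(t, x) ≥ |x| ^ q / 2` and `|x| ^ (q - 2) ≥ 1 / β`.
Otherwise the largest `|y j|` exceeds `β ≥ t j`, so that summand alone is at least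
`|y j| ^ q / 2 ≥ ‖y‖_q ^ q / (2n)`.
-/

open Finset

/-- The smoothed `q`-norm function `γ_q(t,x)`. -/
noncomputable def gammaFn (q t x : ℝ) : ℝ :=
  if |x| ≤ t then (q / 2) * t ^ (q - 2) * x ^ 2
  else |x| ^ q + (q / 2 - 1) * t ^ q

section gammaFn

variable {q t x : ℝ}

lemma gammaFn_of_abs_le (h : |x| ≤ t) : gammaFn q t x = (q / 2) * t ^ (q - 2) * x ^ 2 :=
  if_pos h

lemma gammaFn_of_lt_abs (h : t < |x|) : gammaFn q t x = |x| ^ q + (q / 2 - 1) * t ^ q :=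
  if_neg h.not_ge

lemma half_abs_rpow_le_gammaFn (ht : 0 ≤ t) (hq1 : 1 ≤ q) (hq2 : q ≤ 2) (hx : t < |x|) :
    |x| ^ q / 2 ≤ gammaFn q t x := by
  rw [gammaFn_of_lt_abs hx]
  have htx : t ^ q ≤ |x| ^ q := Real.rpow_le_rpow ht hx.le (by linarith)
  nlinarith [mul_le_mul_of_nonpos_left htx (by linarith : q / 2 - 1 ≤ 0),
    mul_nonneg (by linarith : 0 ≤ q - 1) (Real.rpow_nonneg (abs_nonneg x) q)]

lemma gammaFn_nonneg (ht : 0 ≤ t) (hq1 : 1 ≤ q) (hq2 : q ≤ 2) : 0 ≤ gammaFn q t x := by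
  rcases le_or_gt |x| t with hx | hx
  · rw [gammaFn_of_abs_le hx]
    have : 0 ≤ t ^ (q - 2) := Real.rpow_nonneg ht _
    have : 0 ≤ q := by linarith
    positivity
  · exact le_trans (by positivity) (half_abs_rpow_le_gammaFn ht hq1 hq2 hx)

lemma inv_le_rpow_sub_two {s β : ℝ} (hs : 1 ≤ s) (hsβ : s ≤ β) (hq : 1 ≤ q) :
    β⁻¹ ≤ s ^ (q - 2) :=
  calc β⁻¹ ≤ s⁻¹ := inv_anti₀ (by linarith) hsβ
    _ = s ^ (-1 : ℝ) := (Real.rpow_neg_one s).symm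
    _ ≤ s ^ (q - 2) := Real.rpow_le_rpow_of_exponent_le hs (by linarith)

lemma sq_div_two_mul_le_gammaFn {β : ℝ} (ht1 : 1 ≤ t) (ht2 : t ≤ β) (hq1 : 1 ≤ q) (hq2 : q ≤ 2)
    (hx : |x| ≤ β) : x ^ 2 / (2 * β) ≤ gammaFn q t x := by
  have hβ : 0 < β := by linarith
  rcases le_or_gt |x| t with hxt | hxt
  · rw [gammaFn_of_abs_le hxt]
    calc x ^ 2 / (2 * β) = 1 / 2 * β⁻¹ * x ^ 2 := by ring
      _ ≤ q / 2 * t ^ (q - 2) * x ^ 2 := by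
        gcongr
        exact inv_le_rpow_sub_two ht1 ht2 hq1
  · have hx1 : 1 ≤ |x| := ht1.trans hxt.le
    calc x ^ 2 / (2 * β) = |x| ^ (2 : ℝ) * β⁻¹ / 2 := by
          rw [Real.rpow_two, sq_abs]; ring
      _ ≤ |x| ^ (2 : ℝ) * |x| ^ (q - 2) / 2 := by
        gcongr
        exact inv_le_rpow_sub_two hx1 hx hq1
      _ = |x| ^ q / 2 := by
        rw [← Real.rpow_add (by linarith), add_sub_cancel]
      _ ≤ gammaFn q t x := half_abs_rpow_le_gammaFn (by linarith) hq1 hq2 hxt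

end gammaFn

theorem stmt6_general (n : ℕ) (y t : Fin n → ℝ) (β : ℝ) (q : ℝ)
    (ht1 : ∀ i, 1 ≤ t i) (ht2 : ∀ i, t i ≤ β)
    (hq1 : 1 ≤ q) (hq2 : q ≤ 2) :
    min ((∑ i, (y i) ^ 2) / (8 * β)) ((∑ i, |y i| ^ q) / (8 * n))
      ≤ ∑ i, gammaFn q (t i) (y i) := by
  by_cases hsmall : ∀ i, |y i| ≤ β
  · refine (min_le_left _ _).trans ?_
    rw [sum_div]
    refine sum_le_sum fun i _ => le_trans ?_
      (sq_div_two_mul_le_gammaFn (ht1 i) (ht2 i) hq1 hq2 (hsmall i))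
    have hβ : 0 < β := by linarith [ht1 i, ht2 i]
    gcongr
    linarith
  · push Not at hsmall
    obtain ⟨j₀, hj₀⟩ := hsmall
    obtain ⟨j, -, hj⟩ := exists_max_image univ (fun i => |y i|) ⟨j₀, mem_univ _⟩
    have hjβ : t j < |y j| := (ht2 j).trans_lt (hj₀.trans_le (hj j₀ (mem_univ _)))
    have hsum : ∑ i, |y i| ^ q ≤ n * |y j| ^ q := by
      simpa using sum_le_card_nsmul univ (fun i => |y i| ^ q) _
        fun i _ => Real.rpow_le_rpow (abs_nonneg _) (hj i (mem_univ _)) (by linarith)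
    have hn : (0 : ℝ) < n := by exact_mod_cast j.pos
    have hpos : 0 ≤ |y j| ^ q := Real.rpow_nonneg (abs_nonneg _) q
    calc min _ _ ≤ (∑ i, |y i| ^ q) / (8 * n) := min_le_right _ _
      _ ≤ n * |y j| ^ q / (8 * n) := by gcongr
      _ = |y j| ^ q / 8 := by field_simp
      _ ≤ |y j| ^ q / 2 := by linarith
      _ ≤ gammaFn q (t j) (y j) := half_abs_rpow_le_gammaFn (by linarith [ht1 j]) hq1 hq2 hjβ
      _ ≤ ∑ i, gammaFn q (t i) (y i) :=
        single_le_sum (fun i _ => gammaFn_nonneg (by linarith [ht1 i]) hq1 hq2) (mem_univ j)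

/-- if `y, t ≥ 0`, `1 ≤ t_i ≤ β`, and `1 ≤ q ≤ 2`, then
`Σ_i γ_q(t_i, y_i) ≥ min{‖y‖₂²/(8β), ‖y‖_q^q/(8n)}`. -/
theorem stmt6 (n : ℕ) (y t : Fin n → ℝ) (β : ℝ) (q : ℝ)
    (hy : ∀ i, 0 ≤ y i) (ht1 : ∀ i, 1 ≤ t i) (ht2 : ∀ i, t i ≤ β)
    (hq1 : 1 ≤ q) (hq2 : q ≤ 2) :
    min ((∑ i, (y i) ^ 2) / (8 * β)) ((∑ i, |y i| ^ q) / (8 * n))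
      ≤ ∑ i, gammaFn q (t i) (y i) :=
  stmt6_general n y t β q ht1 ht2 hq1 hq2
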